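/- Let φ_x be the density of U·x + U·(1−U) for U uniform on [0,1], and let r(t) = (1/2)·1_{[0,1/4)}(t). Then for every x ∈ [0,1], the function g_x := φ_x − r is nonnegative on [0,1] with ∫₀¹ g_x(t) dt = 7/8, and the cumulative distribution function of the normalized density g_x/(7/8) is G_x(y) = (8/7)·(F_x(y) − (1/2)·min(y, 1/4)) for y ∈ [0,1], where F_x is the distribution function of U·x + U·(1−U). -/

import Mathlib

open MeasureTheory

/-- The density `φ_x(t) = ((1+x)² − 4t)^{−1/2} · (1_{[0,x)}(t) + 2·1_{[x,b_x)}(t))`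
with `b_x = ((1+x)/2)²`. -/
noncomputable def phi (x t : ℝ) : ℝ :=
  ((1 + x) ^ 2 - 4 * t) ^ (-(1:ℝ) / 2) *
    (Set.indicator (Set.Ico (0:ℝ) x) 1 t
      + 2 * Set.indicator (Set.Ico x (((1 + x) / 2) ^ 2)) 1 t)

/-- `r(t) = (1/2)·1_{[0,1/4)}(t)`. -/
noncomputable def r (t : ℝ) : ℝ := (1 / 2) * Set.indicator (Set.Ico (0:ℝ) (1 / 4)) 1 t

/-- The distribution function `F_x` of `U·x + U·(1−U)` for `U` uniform on `[0,1]`. -/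
noncomputable def F (x y : ℝ) : ℝ :=
  if y < x then (1 + x - Real.sqrt ((1 + x) ^ 2 - 4 * y)) / 2
  else if y < ((1 + x) / 2) ^ 2 then 1 - Real.sqrt ((1 + x) ^ 2 - 4 * y)
  else 1

/-- `G_x(y) = (8/7)·(F_x(y) − (1/2)·min(y, 1/4))`. -/
noncomputable def G (x y : ℝ) : ℝ := 8 / 7 * (F x y - (1 / 2) * min y (1 / 4))

/-!
On `[0, x)` the density is `h(t) = ((1+x)² − 4t)^{−1/2}` and on `[x, b_x)` it is `2 h(t)`, where
`h` has antiderivative `−√((1+x)² − 4t) / 2`; integrating piecewise gives `F_x`. Subtracting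
`∫₀^y r = min(y, 1/4) / 2` gives the distribution function, normalised by `F_x(1) − 1/8 = 7/8`.
For `t < 1/4 ≤ b_x` we have `0 < (1+x)² − 4t ≤ 4`, hence `φ_x(t) ≥ h(t) ≥ 1/2 = r(t)`.
-/

open Set

theorem IntervalIntegrable.indicator {E : Type*} [NormedAddCommGroup E] {f : ℝ → E}
    {μ : Measure ℝ} {a b : ℝ} (hf : IntervalIntegrable f μ a b) {s : Set ℝ}
    (hs : MeasurableSet s) : IntervalIntegrable (s.indicator f) μ a b :=
  ⟨hf.1.indicator hs, hf.2.indicator hs⟩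

section IntervalIndicator

variable {E : Type*} [NormedAddCommGroup E] [NormedSpace ℝ E] {f : ℝ → E} {a b u v : ℝ}

theorem intervalIntegral_indicator_Ico_of_subset (hua : u ≤ a) (hbv : b ≤ v) (hab : a ≤ b) :
    ∫ t in a..b, (Ico u v).indicator f t = ∫ t in a..b, f t :=
  intervalIntegral.integral_congr_Ioo_of_le hab fun t ht =>
    indicator_of_mem (show t ∈ Ico u v from ⟨hua.trans ht.1.le, ht.2.trans_le hbv⟩) f

theorem intervalIntegral_indicator_Ico_of_disjoint (hab : a ≤ b) (h : b ≤ u ∨ v ≤ a) :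
    ∫ t in a..b, (Ico u v).indicator f t = 0 := by
  rw [intervalIntegral.integral_congr_Ioo_of_le hab (g := fun _ => 0),
    intervalIntegral.integral_zero]
  refine fun t ht => indicator_of_notMem (fun hm => ?_) f
  rcases h with h | h
  · exact (ht.2.trans_le h).not_ge hm.1
  · exact (hm.2.trans_le (h.trans ht.1.le)).false

end IntervalIndicator

/-- At a negative base `rpow` is `exp (log u * y) * cos (y * π)`, which vanishes for `y = -1/2`. -/
theorem Real.rpow_neg_half_nonneg (u : ℝ) : 0 ≤ u ^ (-(1:ℝ) / 2) := by
  rcases le_or_gt 0 u with h | h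
  · exact Real.rpow_nonneg h _
  · rw [Real.rpow_def_of_neg h, show -(1:ℝ) / 2 * Real.pi = -(Real.pi / 2) by ring,
      Real.cos_neg, Real.cos_pi_div_two, mul_zero]

theorem half_le_rpow_neg_half {u : ℝ} (hu : 0 < u) (hu4 : u ≤ 4) :
    1 / 2 ≤ u ^ (-(1:ℝ) / 2) :=
  calc (1:ℝ) / 2 = 4 ^ (-(1:ℝ) / 2) := by norm_num
    _ ≤ u ^ (-(1:ℝ) / 2) := Real.rpow_le_rpow_of_nonpos hu hu4 (by norm_num)

theorem intervalIntegrable_rpow_neg_half_sub (c a b : ℝ) :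
    IntervalIntegrable (fun t => (c - 4 * t) ^ (-(1:ℝ) / 2)) volume a b := by
  simpa using ((intervalIntegral.intervalIntegrable_rpow' (r := -(1:ℝ) / 2) (by norm_num)
    (a := c - 4 * a) (b := c - 4 * b)).comp_sub_left c).comp_mul_left (c := 4)

theorem integral_rpow_neg_half_sub (c a b : ℝ) :
    ∫ t in a..b, (c - 4 * t) ^ (-(1:ℝ) / 2) = (√(c - 4 * a) - √(c - 4 * b)) / 2 := by
  have h := intervalIntegral.integral_comp_mul_add (fun u : ℝ => u ^ (-(1:ℝ) / 2))
    (by norm_num : (-4:ℝ) ≠ 0) c (a := a) (b := b)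
  rw [integral_rpow (Or.inl (by norm_num)), show -(1:ℝ) / 2 + 1 = 1 / 2 by norm_num,
    ← Real.sqrt_eq_rpow, ← Real.sqrt_eq_rpow] at h
  convert h using 1
  · simp only [neg_mul, ← sub_eq_neg_add]
  · simp only [smul_eq_mul, neg_mul, ← sub_eq_neg_add]; ring

theorem r_eq_indicator (t : ℝ) : r t = (Ico (0:ℝ) (1 / 4)).indicator (fun _ => 1 / 2) t := by
  simp only [r, indicator_apply, Pi.one_apply]
  split_ifs <;> norm_num

theorem intervalIntegrable_r (a b : ℝ) : IntervalIntegrable r volume a b := by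
  rw [funext r_eq_indicator]
  exact intervalIntegrable_const.indicator measurableSet_Ico

theorem integral_r {y : ℝ} (hy : 0 ≤ y) : ∫ t in (0:ℝ)..y, r t = 1 / 2 * min y (1 / 4) := by
  simp only [r_eq_indicator]
  rcases le_or_gt y (1 / 4) with hy4 | hy4
  · rw [intervalIntegral_indicator_Ico_of_subset le_rfl hy4 hy, intervalIntegral.integral_const,
      min_eq_left hy4, smul_eq_mul]
    ring
  · rw [← intervalIntegral.integral_add_adjacent_intervals
        (intervalIntegrable_const.indicator measurableSet_Ico)
        (intervalIntegrable_const.indicator measurableSet_Ico),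
      intervalIntegral_indicator_Ico_of_subset le_rfl le_rfl (by norm_num),
      intervalIntegral_indicator_Ico_of_disjoint hy4.le (Or.inr le_rfl),
      intervalIntegral.integral_const, min_eq_right hy4.le, smul_eq_mul]
    norm_num

section Phi

variable {x : ℝ}

theorem phi_eq_indicator (x t : ℝ) : phi x t =
    (Ico 0 x).indicator (fun t => ((1 + x) ^ 2 - 4 * t) ^ (-(1:ℝ) / 2)) t
      + (Ico x (((1 + x) / 2) ^ 2)).indicator
          (fun t => 2 * ((1 + x) ^ 2 - 4 * t) ^ (-(1:ℝ) / 2)) t := by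
  simp only [phi, indicator_apply, Pi.one_apply]
  split_ifs <;> ring

theorem intervalIntegral_phi_eq_add (x a b : ℝ) : ∫ t in a..b, phi x t =
    (∫ t in a..b, (Ico 0 x).indicator (fun t => ((1 + x) ^ 2 - 4 * t) ^ (-(1:ℝ) / 2)) t)
      + ∫ t in a..b, (Ico x (((1 + x) / 2) ^ 2)).indicator
          (fun t => 2 * ((1 + x) ^ 2 - 4 * t) ^ (-(1:ℝ) / 2)) t := by
  have h := intervalIntegrable_rpow_neg_half_sub ((1 + x) ^ 2) a b
  simp only [phi_eq_indicator]
  exact intervalIntegral.integral_add (h.indicator measurableSet_Ico)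
    ((h.const_mul 2).indicator measurableSet_Ico)

theorem intervalIntegrable_phi (x a b : ℝ) : IntervalIntegrable (phi x) volume a b := by
  have h := intervalIntegrable_rpow_neg_half_sub ((1 + x) ^ 2) a b
  rw [funext (phi_eq_indicator x)]
  exact (h.indicator measurableSet_Ico).add ((h.const_mul 2).indicator measurableSet_Ico)

theorem integral_phi_of_le {y : ℝ} (hy : 0 ≤ y) (hyx : y ≤ x) :
    ∫ t in (0:ℝ)..y, phi x t = (1 + x - √((1 + x) ^ 2 - 4 * y)) / 2 := by
  rw [intervalIntegral_phi_eq_add, intervalIntegral_indicator_Ico_of_subset le_rfl hyx hy,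
    intervalIntegral_indicator_Ico_of_disjoint hy (Or.inl hyx), integral_rpow_neg_half_sub,
    mul_zero, sub_zero, Real.sqrt_sq (by linarith), add_zero]

theorem integral_phi_of_le_of_le {y : ℝ} (hxy : x ≤ y) (hyb : y ≤ ((1 + x) / 2) ^ 2) :
    ∫ t in x..y, phi x t = √((1 + x) ^ 2 - 4 * x) - √((1 + x) ^ 2 - 4 * y) := by
  rw [intervalIntegral_phi_eq_add, intervalIntegral_indicator_Ico_of_disjoint hxy (Or.inr le_rfl),
    intervalIntegral_indicator_Ico_of_subset le_rfl hyb hxy, intervalIntegral.integral_const_mul,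
    integral_rpow_neg_half_sub]
  ring

theorem integral_phi_of_ge {y : ℝ} (hby : ((1 + x) / 2) ^ 2 ≤ y) :
    ∫ t in ((1 + x) / 2) ^ 2..y, phi x t = 0 := by
  have hxb : x ≤ ((1 + x) / 2) ^ 2 := by nlinarith [sq_nonneg (1 - x)]
  rw [intervalIntegral_phi_eq_add, intervalIntegral_indicator_Ico_of_disjoint hby (Or.inr hxb),
    intervalIntegral_indicator_Ico_of_disjoint hby (Or.inr le_rfl), add_zero]

theorem integral_phi_eq_F (hx : x ∈ Icc (0:ℝ) 1) {y : ℝ} (hy : 0 ≤ y) :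
    ∫ t in (0:ℝ)..y, phi x t = F x y := by
  obtain ⟨hx0, hx1⟩ := hx
  set b := ((1 + x) / 2) ^ 2 with hb
  have hxb : x ≤ b := by nlinarith [sq_nonneg (1 - x)]
  have hsqrt_x : √((1 + x) ^ 2 - 4 * x) = 1 - x := by
    rw [show (1 + x) ^ 2 - 4 * x = (1 - x) ^ 2 by ring, Real.sqrt_sq (by linarith)]
  have add_adjacent := fun u => intervalIntegral.integral_add_adjacent_intervals
    (intervalIntegrable_phi x 0 u) (intervalIntegrable_phi x u y)
  rcases lt_or_ge y x with hyx | hxy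
  · rw [F, if_pos hyx, integral_phi_of_le hy hyx.le]
  rcases lt_or_ge y b with hyb | hby
  · rw [F, if_neg hxy.not_gt, if_pos hyb, ← add_adjacent x, integral_phi_of_le hx0 le_rfl,
      integral_phi_of_le_of_le hxy hyb.le, hsqrt_x]
    ring
  · rw [F, if_neg hxy.not_gt, if_neg hby.not_gt, ← add_adjacent b, integral_phi_of_ge hby,
      ← intervalIntegral.integral_add_adjacent_intervals (intervalIntegrable_phi x 0 x)
        (intervalIntegrable_phi x x b), integral_phi_of_le hx0 le_rfl,
      integral_phi_of_le_of_le hxb le_rfl, hsqrt_x,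
      show (1 + x) ^ 2 - 4 * b = 0 by rw [hb]; ring, Real.sqrt_zero]
    ring

theorem phi_nonneg (x t : ℝ) : 0 ≤ phi x t :=
  mul_nonneg (Real.rpow_neg_half_nonneg _) <| add_nonneg (indicator_nonneg (by simp) t)
    (mul_nonneg zero_le_two (indicator_nonneg (by simp) t))

theorem rpow_neg_half_le_phi {t : ℝ} (ht : 0 ≤ t) (htb : t < ((1 + x) / 2) ^ 2) :
    ((1 + x) ^ 2 - 4 * t) ^ (-(1:ℝ) / 2) ≤ phi x t := by
  have h_nonneg := Real.rpow_neg_half_nonneg ((1 + x) ^ 2 - 4 * t)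
  rw [phi_eq_indicator]
  rcases lt_or_ge t x with htx | hxt
  · rw [indicator_of_mem (show t ∈ Ico 0 x from ⟨ht, htx⟩),
      indicator_of_notMem (fun h : t ∈ Ico x _ => h.1.not_gt htx)]
    simp
  · rw [indicator_of_notMem (fun h : t ∈ Ico 0 x => h.2.not_ge hxt),
      indicator_of_mem (show t ∈ Ico x _ from ⟨hxt, htb⟩)]
    linarith

theorem r_le_phi {t : ℝ} (hx : x ∈ Icc (0:ℝ) 1) (ht : 0 ≤ t) : r t ≤ phi x t := by
  obtain ⟨hx0, hx1⟩ := hx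
  rw [r_eq_indicator]
  by_cases ht4 : t ∈ Ico (0:ℝ) (1 / 4)
  · have htb : t < ((1 + x) / 2) ^ 2 := by nlinarith [ht4.2]
    rw [indicator_of_mem ht4]
    calc (1:ℝ) / 2 ≤ ((1 + x) ^ 2 - 4 * t) ^ (-(1:ℝ) / 2) :=
          half_le_rpow_neg_half (by nlinarith) (by nlinarith)
      _ ≤ phi x t := rpow_neg_half_le_phi ht htb
  · rw [indicator_of_notMem ht4]
    exact phi_nonneg x t

theorem integral_phi_sub_r (hx : x ∈ Icc (0:ℝ) 1) {y : ℝ} (hy : 0 ≤ y) :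
    ∫ t in (0:ℝ)..y, (phi x t - r t) = F x y - 1 / 2 * min y (1 / 4) := by
  rw [intervalIntegral.integral_sub (intervalIntegrable_phi x 0 y) (intervalIntegrable_r 0 y),
    integral_phi_eq_F hx hy, integral_r hy]

end Phi

/-- For `x ∈ [0,1]`, `g_x := φ_x − r` is nonnegative on `[0,1]`, has total integral `7/8`
over `[0,1]`, and the distribution function of the normalized density `g_x/(7/8)` is
`G_x(y) = (8/7)·(F_x(y) − (1/2)·min(y, 1/4))`. -/
theorem residual_density (x : ℝ) (hx : x ∈ Set.Icc (0:ℝ) 1) :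
    (∀ t ∈ Set.Icc (0:ℝ) 1, 0 ≤ phi x t - r t) ∧
    (∫ t in (0:ℝ)..1, (phi x t - r t)) = 7 / 8 ∧
    (∀ y ∈ Set.Icc (0:ℝ) 1, (∫ t in (0:ℝ)..y, (phi x t - r t) / (7 / 8)) = G x y) := by
  have hF1 : F x 1 = 1 := by
    have hb1 : ((1 + x) / 2) ^ 2 ≤ 1 := by nlinarith [hx.1, hx.2]
    rw [F, if_neg hx.2.not_gt, if_neg hb1.not_gt]
  refine ⟨fun t ht => sub_nonneg.mpr (r_le_phi hx ht.1), ?_, fun y hy => ?_⟩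
  · rw [integral_phi_sub_r hx zero_le_one, hF1]
    norm_num
  · rw [intervalIntegral.integral_div, integral_phi_sub_r hx hy.1, G]
    ring
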